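/- Let z₀ ∈ ℂ, r > 0, and let (gₙ) be a sequence of functions holomorphic (pole-free) on the disk D_{r/2}(z₀) = {z : |z − z₀| < r/2} and meromorphic on D_r(z₀). If (gₙ) converges locally uniformly, with respect to the spherical metric, on the punctured disk D_r(z₀) \ {z₀} to a meromorphic function h with h ≢ ∞, then gₙ converges locally uniformly (in particular, uniformly on compact subsets) on the full disk D_{r/2}(z₀); consequently the family {gₙ} is normal at z₀. -/

import Mathlib

/-!
Since the punctured disc is connected and `h ≢ ∞`, the `∞`-points of `h` are isolated, hence
countable. So every `x` with `|x - z₀| < r/2` lies inside a circle `|z - z₀| = ρ < r/2` on which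
`h` is finite, hence bounded; there the spherical uniform convergence `gₙ → h` is euclidean
uniform convergence, and the maximum modulus principle applied to `gₙ - gₘ` makes `(gₙ)`
uniformly Cauchy on the disc `|z - z₀| ≤ ρ`.
-/

open OnePoint Metric Filter Complex Set

noncomputable section

/-- The finite part of a point of the Riemann sphere `ℂ ∪ {∞}` (junk value `0` at `∞`). -/
def sphToC (p : OnePoint ℂ) : ℂ := Option.elim p 0 id

open Classical in
/-- Inversion `w ↦ 1/w` on the Riemann sphere `ℂ ∪ {∞}`. -/
def sphInv (p : OnePoint ℂ) : OnePoint ℂ :=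
  if p = ∞ then ((0 : ℂ) : OnePoint ℂ)
  else if sphToC p = 0 then ∞ else (((sphToC p)⁻¹ : ℂ) : OnePoint ℂ)

open Classical in
/-- The spherical (chordal) metric on the Riemann sphere `ℂ ∪ {∞}`. -/
def sphDist (p q : OnePoint ℂ) : ℝ :=
  if p = ∞ then
    (if q = ∞ then 0 else 2 / Real.sqrt (1 + ‖sphToC q‖ ^ 2))
  else if q = ∞ then 2 / Real.sqrt (1 + ‖sphToC p‖ ^ 2)
  else 2 * ‖sphToC p - sphToC q‖ /
    (Real.sqrt (1 + ‖sphToC p‖ ^ 2) * Real.sqrt (1 + ‖sphToC q‖ ^ 2))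

/-- `f : ℂ → ℂ ∪ {∞}` is meromorphic at `z`: near `z` it agrees with an analytic function,
or with the spherical inverse of an analytic function (covering poles and `≡ ∞`). -/
def SphMeromorphicAt (f : ℂ → OnePoint ℂ) (z : ℂ) : Prop :=
  (∃ g : ℂ → ℂ, AnalyticAt ℂ g z ∧ ∀ᶠ w in nhds z, f w = ((g w : ℂ) : OnePoint ℂ)) ∨
  (∃ g : ℂ → ℂ, AnalyticAt ℂ g z ∧ ∀ᶠ w in nhds z, f w = sphInv ((g w : ℂ) : OnePoint ℂ))

/-- `f` is meromorphic (as a map to the Riemann sphere) on a set `Ω ⊆ ℂ`. -/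
def SphMeromorphicOn (f : ℂ → OnePoint ℂ) (Ω : Set ℂ) : Prop :=
  ∀ z ∈ Ω, SphMeromorphicAt f z

/-- Locally uniform (= uniform on compact subsets, for open `Ω`) convergence of a sequence of
sphere-valued functions on `Ω`, with respect to the spherical metric. -/
def SphLocUnifOn (F : ℕ → ℂ → OnePoint ℂ) (g : ℂ → OnePoint ℂ) (Ω : Set ℂ) : Prop :=
  ∀ K : Set ℂ, K ⊆ Ω → IsCompact K → ∀ ε : ℝ, 0 < ε →
    ∃ N : ℕ, ∀ n ≥ N, ∀ z ∈ K, sphDist (F n z) (g z) < ε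

/-- A family `𝓕` of sphere-valued functions is normal on `Ω`: every sequence in `𝓕` has a
subsequence converging locally uniformly on `Ω` (spherical metric) to a meromorphic function
or to the constant `∞`. -/
def SphNormalOn (𝓕 : Set (ℂ → OnePoint ℂ)) (Ω : Set ℂ) : Prop :=
  ∀ F : ℕ → ℂ → OnePoint ℂ, (∀ n, F n ∈ 𝓕) →
    ∃ φ : ℕ → ℕ, StrictMono φ ∧ ∃ g : ℂ → OnePoint ℂ,
      (SphMeromorphicOn g Ω ∨ ∀ z ∈ Ω, g z = ∞) ∧
      SphLocUnifOn (fun n => F (φ n)) g Ω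

/-- A family is normal at a point if it is normal on some open neighbourhood of the point. -/
def SphNormalAt (𝓕 : Set (ℂ → OnePoint ℂ)) (z₀ : ℂ) : Prop :=
  ∃ U : Set ℂ, IsOpen U ∧ z₀ ∈ U ∧ SphNormalOn 𝓕 U

open Classical in
/-- The derivative of a sphere-valued meromorphic function: `∞` at poles (and where `f = ∞`),
and the usual derivative of the finite part elsewhere. -/
def sphDeriv (f : ℂ → OnePoint ℂ) : ℂ → OnePoint ℂ :=
  fun z => if f z = ∞ then ∞ else ((deriv (fun w => sphToC (f w)) z : ℂ) : OnePoint ℂ)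

/-- All zeros of `f` on `Ω` have multiplicity at least `m`: at every zero, the first `m`
derivatives (orders `0, …, m-1`) of the finite part of `f` vanish. -/
def SphZerosMultAtLeast (f : ℂ → OnePoint ℂ) (Ω : Set ℂ) (m : ℕ) : Prop :=
  ∀ z ∈ Ω, f z = ((0 : ℂ) : OnePoint ℂ) →
    ∀ j < m, iteratedDeriv j (fun w => sphToC (f w)) z = 0

open Topology

@[simp]
lemma sphToC_coe (a : ℂ) : sphToC (a : OnePoint ℂ) = a := rfl

lemma coe_sphToC {p : OnePoint ℂ} (hp : p ≠ ∞) : (sphToC p : OnePoint ℂ) = p := by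
  induction p using OnePoint.rec with
  | infty => exact absurd rfl hp
  | coe a => rfl

lemma sphInv_coe (a : ℂ) :
    sphInv (a : OnePoint ℂ) = if a = 0 then ∞ else ((a⁻¹ : ℂ) : OnePoint ℂ) := by
  rw [sphInv, if_neg (coe_ne_infty a), sphToC_coe]

lemma sphDist_coe_coe (a b : ℂ) :
    sphDist (a : OnePoint ℂ) b =
      2 * ‖a - b‖ / (Real.sqrt (1 + ‖a‖ ^ 2) * Real.sqrt (1 + ‖b‖ ^ 2)) := by
  simp [sphDist]

lemma sphDist_self (p : OnePoint ℂ) : sphDist p p = 0 := by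
  induction p using OnePoint.rec with
  | infty => simp [sphDist]
  | coe a => simp [sphDist_coe_coe]

lemma sphDist_coe_le (a b : ℂ) : sphDist (a : OnePoint ℂ) b ≤ 2 * ‖a - b‖ := by
  rw [sphDist_coe_coe]
  refine div_le_self (by positivity) (one_le_mul_of_one_le_of_one_le ?_ ?_) <;>
    exact Real.one_le_sqrt.2 (le_add_of_nonneg_right (by positivity))

lemma two_mul_norm_sub_div_le_sphDist (a b : ℂ) :
    2 * ‖a - b‖ / ((1 + ‖a‖) * (1 + ‖b‖)) ≤ sphDist (a : OnePoint ℂ) b := by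
  have sqrt_le (x : ℝ) (hx : 0 ≤ x) : Real.sqrt (1 + x ^ 2) ≤ 1 + x :=
    Real.sqrt_le_iff.2 ⟨by positivity, by nlinarith⟩
  rw [sphDist_coe_coe]
  gcongr
  · exact sqrt_le _ (norm_nonneg a)
  · exact sqrt_le _ (norm_nonneg b)

lemma norm_sub_lt_of_sphDist_lt {a b : ℂ} {M δ : ℝ} (hb : ‖b‖ ≤ M) (hδ : δ * (1 + M) ≤ 1)
    (hab : sphDist (a : OnePoint ℂ) b < δ) : ‖a - b‖ < δ * (1 + M) ^ 2 := by
  have hM : 0 ≤ M := (norm_nonneg b).trans hb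
  have ha := norm_le_norm_sub_add a b
  have hlow := two_mul_norm_sub_div_le_sphDist a b
  have hδ0 : 0 < δ := lt_of_le_of_lt (le_trans (by positivity) hlow) hab
  have key : 2 * ‖a - b‖ < δ * ((1 + ‖a‖) * (1 + ‖b‖)) :=
    (div_lt_iff₀ (by positivity)).1 (hlow.trans_lt hab)
  have hprod : (1 + ‖a‖) * (1 + ‖b‖) ≤ (1 + M + ‖a - b‖) * (1 + M) :=
    mul_le_mul (by linarith) (by linarith) (by positivity) (by positivity)
  nlinarith [mul_le_mul_of_nonneg_left hprod hδ0.le,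
    mul_le_mul_of_nonneg_right hδ (norm_nonneg (a - b))]

namespace SphMeromorphicAt

variable {f : ℂ → OnePoint ℂ} {z : ℂ}

lemma eventually_ne_infty (hf : SphMeromorphicAt f z) (hz : f z ≠ ∞) :
    ∀ᶠ w in 𝓝 z, f w ≠ ∞ := by
  rcases hf with ⟨G, -, hfG⟩ | ⟨G, hG, hfG⟩
  · filter_upwards [hfG] with w hw
    simp [hw]
  · have hGz : G z ≠ 0 := fun h0 => hz (by rw [hfG.self_of_nhds, sphInv_coe, if_pos h0])
    filter_upwards [hfG, hG.continuousAt.eventually_ne hGz] with w hw hGw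
    simp [hw, sphInv_coe, hGw]

lemma analyticAt_sphToC (hf : SphMeromorphicAt f z) (hfin : ∀ᶠ w in 𝓝 z, f w ≠ ∞) :
    AnalyticAt ℂ (fun w => sphToC (f w)) z := by
  rcases hf with ⟨G, hG, hfG⟩ | ⟨G, hG, hfG⟩
  · exact hG.congr (hfG.mono fun w hw => by simp [hw])
  · have hGne : ∀ᶠ w in 𝓝 z, G w ≠ 0 := by
      filter_upwards [hfG, hfin] with w hw hfw h0
      simp [hw, sphInv_coe, h0] at hfw
    refine (hG.inv hGne.self_of_nhds).congr ?_
    filter_upwards [hfG, hGne] with w hw hGw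
    simp [hw, sphInv_coe, hGw]

lemma eventually_eq_infty_or_eventually_ne_infty (hf : SphMeromorphicAt f z) :
    (∀ᶠ w in 𝓝 z, f w = ∞) ∨ ∀ᶠ w in 𝓝[≠] z, f w ≠ ∞ := by
  rcases hf with ⟨G, -, hfG⟩ | ⟨G, hG, hfG⟩
  · right
    filter_upwards [nhdsWithin_le_nhds hfG] with w hw
    simp [hw]
  · rcases hG.eventually_eq_zero_or_eventually_ne_zero with h0 | h0
    · left
      filter_upwards [hfG, h0] with w hw hGw
      simp [hw, sphInv_coe, hGw]
    · right
      filter_upwards [nhdsWithin_le_nhds hfG, h0] with w hw hGw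
      simp [hw, sphInv_coe, hGw]

end SphMeromorphicAt

lemma isPreconnected_ball_diff_singleton (z₀ : ℂ) (r : ℝ) : IsPreconnected (ball z₀ r \ {z₀}) := by
  rcases le_or_gt r 0 with hr | hr
  · simp [ball_eq_empty.2 hr, isPreconnected_empty]
  have hpolar : ball z₀ r \ {z₀} = (fun s => z₀ + exp s) '' {s : ℂ | s.re < Real.log r} := by
    ext z
    constructor
    · rintro ⟨hz, hzz₀⟩
      have hne : z - z₀ ≠ 0 := sub_ne_zero.2 hzz₀
      refine ⟨log (z - z₀), ?_, by simp [exp_log hne]⟩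
      rw [mem_ofPred_eq, log_re]
      exact Real.log_lt_log (norm_pos_iff.2 hne) (by rwa [mem_ball, dist_eq_norm] at hz)
    · rintro ⟨s, hs, rfl⟩
      refine ⟨?_, by simp [exp_ne_zero]⟩
      rw [mem_ball, dist_eq_norm, add_sub_cancel_left, norm_exp]
      exact (Real.lt_log_iff_exp_lt hr).1 hs
  rw [hpolar]
  exact (convex_halfSpace_re_lt _).isPreconnected.image _ (by fun_prop)

section InfinityPoints

variable {h : ℂ → OnePoint ℂ} {Ω : Set ℂ}

lemma SphMeromorphicOn.eventually_nhdsNE_ne_infty (hh : SphMeromorphicOn h Ω)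
    (hΩ : IsPreconnected Ω) (hne : ∃ w ∈ Ω, h w ≠ ∞) :
    ∀ z ∈ Ω, ∀ᶠ w in 𝓝[≠] z, h w ≠ ∞ := by
  set U := {z | ∀ᶠ w in 𝓝 z, h w = ∞}
  set V := {z | ∀ᶠ w in 𝓝[≠] z, h w ≠ ∞}
  have hUV : ∀ z, z ∉ U ∩ V := fun z ⟨hU, hV⟩ =>
    ((hU.filter_mono nhdsWithin_le_nhds).and hV).exists.elim fun _ hw => hw.2 hw.1
  have hcover : Ω ⊆ U ∪ V := fun z hz =>
    (hh z hz).eventually_eq_infty_or_eventually_ne_infty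
  obtain ⟨w, hwΩ, hw⟩ := hne
  have hwV : w ∈ V := (hcover hwΩ).resolve_left fun hwU => hw hwU.self_of_nhds
  intro z hz
  refine (hcover hz).resolve_left fun hzU => ?_
  obtain ⟨y, -, hy⟩ :=
    hΩ U V isOpen_setOfPred_eventually_nhds isOpen_setOfPred_eventually_nhdsWithin
    hcover ⟨z, hz, hzU⟩ ⟨w, hwΩ, hwV⟩
  exact hUV y hy

lemma SphMeromorphicOn.countable_setOf_eq_infty (hh : SphMeromorphicOn h Ω)
    (hΩ : IsPreconnected Ω) (hne : ∃ w ∈ Ω, h w ≠ ∞) :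
    {z ∈ Ω | h z = ∞}.Countable := by
  refine (HereditarilyLindelofSpace.isLindelof _).countable_of_isDiscrete
    (isDiscrete_iff_nhdsNE.2 fun z hz => ?_)
  rw [inf_principal_eq_bot]
  filter_upwards [hh.eventually_nhdsNE_ne_infty hΩ hne z hz.1] with w hw hwS
  exact hw hwS.2

end InfinityPoints

lemma exists_mem_Ioo_disjoint_sphere {S : Set ℂ} (hS : S.Countable) (c : ℂ) {a b : ℝ}
    (hab : a < b) : ∃ ρ ∈ Ioo a b, Disjoint (sphere c ρ) S := by
  obtain ⟨ρ, hρ, haρ, hρb⟩ := ((hS.image fun z => dist z c).dense_compl ℝ).exists_between hab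
  exact ⟨ρ, ⟨haρ, hρb⟩, disjoint_left.2 fun z hz hzS => hρ ⟨z, hzS, hz⟩⟩

lemma SphLocUnifOn.tendstoUniformlyOn_sphToC {F : ℕ → ℂ → OnePoint ℂ} {h : ℂ → OnePoint ℂ}
    {Ω K : Set ℂ} (hconv : SphLocUnifOn F h Ω) (hKΩ : K ⊆ Ω) (hK : IsCompact K)
    (hF : ∀ n, ∀ z ∈ K, F n z ≠ ∞) (hh : ∀ z ∈ K, h z ≠ ∞)
    (hcont : ContinuousOn (fun z => sphToC (h z)) K) :
    TendstoUniformlyOn (fun n z => sphToC (F n z)) (fun z => sphToC (h z)) atTop K := by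
  obtain ⟨M₀, hM₀⟩ := hK.exists_bound_of_continuousOn hcont
  set M := max M₀ 0
  have hM : 0 < 1 + M := by positivity
  rw [Metric.tendstoUniformlyOn_iff]
  intro ε hε
  set δ := min (1 / (1 + M)) (ε / (1 + M) ^ 2)
  have hδM : δ * (1 + M) ≤ 1 := (le_div_iff₀ hM).1 (min_le_left _ _)
  have hδε : δ * (1 + M) ^ 2 ≤ ε := (le_div_iff₀ (by positivity)).1 (min_le_right _ _)
  obtain ⟨N, hN⟩ := hconv K hKΩ hK δ (by positivity)
  filter_upwards [eventually_ge_atTop N] with n hn z hz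
  have hnz := hN n hn z hz
  rw [← coe_sphToC (hF n z hz), ← coe_sphToC (hh z hz)] at hnz
  rw [dist_comm, dist_eq_norm]
  exact (norm_sub_lt_of_sphDist_lt ((hM₀ z hz).trans (le_max_left _ _)) hδM hnz).trans_le hδε

lemma UniformCauchySeqOn.closedBall_of_sphere {ι : Type*} [Nonempty ι] [SemilatticeSup ι]
    {f : ι → ℂ → ℂ} {c : ℂ} {ρ : ℝ} (hρ : ρ ≠ 0)
    (hf : ∀ n, DifferentiableOn ℂ (f n) (closedBall c ρ))
    (hcauchy : UniformCauchySeqOn f atTop (sphere c ρ)) :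
    UniformCauchySeqOn f atTop (closedBall c ρ) := by
  rw [Metric.uniformCauchySeqOn_iff] at hcauchy ⊢
  intro ε hε
  obtain ⟨N, hN⟩ := hcauchy (ε / 2) (half_pos hε)
  refine ⟨N, fun m hm n hn z hz => ?_⟩
  have hmax : ‖f m z - f n z‖ ≤ ε / 2 := by
    refine Complex.norm_le_of_forall_mem_frontier_norm_le (f := fun w => f m w - f n w)
      isBounded_ball ?_ (fun w hw => ?_)
      (by rwa [closure_ball c hρ])
    · exact DifferentiableOn.diffContOnCl (by rw [closure_ball c hρ]; exact (hf m).sub (hf n))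
    · rw [frontier_ball c hρ] at hw
      exact (dist_eq_norm (f m w) (f n w) ▸ hN m hm n hn w hw).le
  rw [dist_eq_norm]
  linarith

lemma exists_tendstoLocallyUniformlyOn_of_uniformCauchySeqOn {α β ι : Type*}
    [TopologicalSpace α] [UniformSpace β] [CompleteSpace β] [Nonempty β] {p : Filter ι} [p.NeBot]
    {f : ι → α → β} {s : Set α} (hf : ∀ x ∈ s, ∃ t ∈ 𝓝[s] x, UniformCauchySeqOn f p t) :
    ∃ F, TendstoLocallyUniformlyOn f F p s := by
  refine ⟨fun x => limUnder p (f · x), tendstoLocallyUniformlyOn_of_forall_exists_nhds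
    fun x hx => ?_⟩
  obtain ⟨t, ht, hcauchy⟩ := hf x hx
  exact ⟨t, ht, hcauchy.tendstoUniformlyOn_of_tendsto fun y hy =>
    tendsto_nhds_limUnder (CompleteSpace.complete (hcauchy.cauchy_map hy))⟩

lemma TendstoLocallyUniformlyOn.sphLocUnifOn {g : ℕ → ℂ → OnePoint ℂ} {F : ℂ → ℂ} {Ω : Set ℂ}
    (hconv : TendstoLocallyUniformlyOn (fun n z => sphToC (g n z)) F atTop Ω)
    (hΩ : IsOpen Ω) (hg : ∀ n, ∀ z ∈ Ω, g n z ≠ ∞) :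
    SphLocUnifOn g (fun z => F z) Ω := by
  intro K hKΩ hK ε hε
  have hunif := (tendstoLocallyUniformlyOn_iff_forall_isCompact hΩ).1 hconv K hKΩ hK
  obtain ⟨N, hN⟩ := eventually_atTop.1 (Metric.tendstoUniformlyOn_iff.1 hunif (ε / 2) (half_pos hε))
  refine ⟨N, fun n hn z hz => ?_⟩
  rw [← coe_sphToC (hg n z (hKΩ hz))]
  calc _ ≤ 2 * ‖sphToC (g n z) - F z‖ := sphDist_coe_le _ _
    _ < ε := by rw [← dist_eq_norm, dist_comm]; linarith [hN n hn z hz]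

lemma DifferentiableOn.sphMeromorphicOn {F : ℂ → ℂ} {Ω : Set ℂ} (hF : DifferentiableOn ℂ F Ω)
    (hΩ : IsOpen Ω) : SphMeromorphicOn (fun z => F z) Ω :=
  fun _ hz => .inl ⟨F, hF.analyticAt (hΩ.mem_nhds hz), .of_forall fun _ => rfl⟩

lemma SphLocUnifOn.comp_tendsto {g : ℕ → ℂ → OnePoint ℂ} {H : ℂ → OnePoint ℂ} {Ω : Set ℂ}
    (hconv : SphLocUnifOn g H Ω) {m : ℕ → ℕ} (hm : Tendsto m atTop atTop) :
    SphLocUnifOn (fun n => g (m n)) H Ω := by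
  intro K hKΩ hK ε hε
  obtain ⟨N, hN⟩ := hconv K hKΩ hK ε hε
  obtain ⟨N', hN'⟩ := eventually_atTop.1 (hm.eventually (eventually_ge_atTop N))
  exact ⟨N', fun n hn => hN (m n) (hN' n hn)⟩

/-- A sequence of indices either takes some value infinitely often, giving a constant
subsequence, or tends to infinity. -/
lemma sphNormalOn_of_sphLocUnifOn {g : ℕ → ℂ → OnePoint ℂ} {H : ℂ → OnePoint ℂ} {Ω : Set ℂ}
    (hg : ∀ n, SphMeromorphicOn (g n) Ω) (hH : SphMeromorphicOn H Ω)
    (hconv : SphLocUnifOn g H Ω) : SphNormalOn {f | ∃ n, f = g n} Ω := by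
  intro F hF
  choose m hm using hF
  by_cases hfin : ∀ k, (m ⁻¹' {k}).Finite
  · have hm_tendsto : Tendsto m atTop atTop := by
      simpa only [Nat.cofinite_eq_atTop] using
        Tendsto.cofinite_of_finite_preimage_singleton fun k => (hfin k).to_subtype
    refine ⟨id, strictMono_id, H, .inl hH, ?_⟩
    simpa only [id, hm] using hconv.comp_tendsto hm_tendsto
  · push Not at hfin
    obtain ⟨k, hk⟩ := hfin
    obtain ⟨φ, hφ, hφk⟩ := extraction_of_frequently_atTop (Nat.frequently_atTop_iff_infinite.2 hk)
    refine ⟨φ, hφ, g k, .inl (hg k), fun K _ _ ε hε => ⟨0, fun n _ z _ => ?_⟩⟩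
    show sphDist (F (φ n) z) (g k z) < ε
    rwa [hm, show m (φ n) = k from hφk n, sphDist_self]

lemma SphLocUnifOn.uniformCauchySeqOn_closedBall {g : ℕ → ℂ → OnePoint ℂ} {h : ℂ → OnePoint ℂ}
    {Ω : Set ℂ} {c : ℂ} {ρ : ℝ} (hconv : SphLocUnifOn g h Ω) (hh : SphMeromorphicOn h Ω)
    (hρ : ρ ≠ 0) (hρΩ : sphere c ρ ⊆ Ω) (hhρ : ∀ z ∈ sphere c ρ, h z ≠ ∞)
    (hg : ∀ n, DifferentiableOn ℂ (fun z => sphToC (g n z)) (closedBall c ρ))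
    (hgρ : ∀ n, ∀ z ∈ sphere c ρ, g n z ≠ ∞) :
    UniformCauchySeqOn (fun n z => sphToC (g n z)) atTop (closedBall c ρ) := by
  have hcont : ContinuousOn (fun z => sphToC (h z)) (sphere c ρ) := fun z hz =>
    have hhz := hh z (hρΩ hz)
    (hhz.analyticAt_sphToC (hhz.eventually_ne_infty (hhρ z hz))).continuousAt.continuousWithinAt
  exact UniformCauchySeqOn.closedBall_of_sphere hρ hg
    (hconv.tendstoUniformlyOn_sphToC hρΩ (isCompact_sphere c ρ) hgρ hhρ hcont).uniformCauchySeqOn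

/-- If `gₙ` are meromorphic on `D_r(z₀)`, pole-free (holomorphic) on `D_{r/2}(z₀)`, and
converge locally uniformly (spherical metric) on the punctured disk `D_r(z₀) \ {z₀}` to a
meromorphic function `h ≢ ∞`, then `gₙ` converges locally uniformly on the full disk
`D_{r/2}(z₀)`; consequently the family `{gₙ}` is normal at `z₀`. -/
theorem locUnif_on_disk_of_punctured_of_holomorphic
    (z₀ : ℂ) (r : ℝ) (hr : 0 < r)
    (g : ℕ → ℂ → OnePoint ℂ)
    (hmero : ∀ n, SphMeromorphicOn (g n) (ball z₀ r))
    (hpf : ∀ n, ∀ z ∈ ball z₀ (r / 2), g n z ≠ ∞)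
    (h : ℂ → OnePoint ℂ)
    (hh : SphMeromorphicOn h (ball z₀ r \ {z₀}))
    (hne : ¬ ∀ z ∈ ball z₀ r \ {z₀}, h z = ∞)
    (hconv : SphLocUnifOn g h (ball z₀ r \ {z₀})) :
    (∃ H : ℂ → OnePoint ℂ, SphLocUnifOn g H (ball z₀ (r / 2))) ∧
      SphNormalAt {f | ∃ n : ℕ, f = g n} z₀ := by
  push Not at hne
  have hS := hh.countable_setOf_eq_infty (isPreconnected_ball_diff_singleton z₀ r) hne
  have hmero_half : ∀ n, SphMeromorphicOn (g n) (ball z₀ (r / 2)) := fun n z hz =>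
    hmero n z (ball_subset_ball (by linarith) hz)
  have hdiff : ∀ n, DifferentiableOn ℂ (fun z => sphToC (g n z)) (ball z₀ (r / 2)) :=
    fun n z hz => ((hmero_half n z hz).analyticAt_sphToC
      (eventually_of_mem (isOpen_ball.mem_nhds hz) (hpf n))).differentiableAt.differentiableWithinAt
  have hlocal : ∀ x ∈ ball z₀ (r / 2), ∃ t ∈ 𝓝[ball z₀ (r / 2)] x,
      UniformCauchySeqOn (fun n z => sphToC (g n z)) atTop t := by
    intro x hx
    obtain ⟨ρ, ⟨hxρ, hρr⟩, hρS⟩ := exists_mem_Ioo_disjoint_sphere hS z₀ (mem_ball.1 hx)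
    have hρ : ρ ≠ 0 := (dist_nonneg.trans_lt hxρ).ne'
    have hsphere : sphere z₀ ρ ⊆ ball z₀ r \ {z₀} := fun z hz =>
      ⟨sphere_subset_ball (by linarith) hz, ne_of_mem_sphere hz hρ⟩
    refine ⟨closedBall z₀ ρ, mem_nhdsWithin_of_mem_nhds (closedBall_mem_nhds_of_mem hxρ),
      hconv.uniformCauchySeqOn_closedBall hh hρ hsphere ?_ ?_ ?_⟩
    · exact fun z hz hhz => disjoint_left.1 hρS hz ⟨hsphere hz, hhz⟩
    · exact fun n => (hdiff n).mono (closedBall_subset_ball hρr)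
    · exact fun n z hz => hpf n z (sphere_subset_ball hρr hz)
  obtain ⟨F, hF⟩ := exists_tendstoLocallyUniformlyOn_of_uniformCauchySeqOn hlocal
  have hlim := hF.sphLocUnifOn isOpen_ball hpf
  have hH := (hF.differentiableOn (.of_forall hdiff) isOpen_ball).sphMeromorphicOn isOpen_ball
  exact ⟨⟨_, hlim⟩, ball z₀ (r / 2), isOpen_ball, mem_ball_self (by linarith),
    sphNormalOn_of_sphLocUnifOn hmero_half hH hlim⟩
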